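/- Let F : ℝ³ → ℝ³ be a smooth vector field and let α, c ∈ ℝ. Then for every x ∈ ℝ³ with ‖x‖ < 1, the Sturm–Liouville operator of the second kind decomposes as D_c^{(α)}F(x) = L_c^{(α)}F(x) + 2(α+1)F(x) + (1−‖x‖²)·∇(∇·F)(x) − 2(α+1)·∇(y ↦ ⟨y, F(y)⟩)(x), where L_c^{(α)} acts componentwise on vector fields. -/

import Mathlib

noncomputable section
open MeasureTheory
open scoped RealInnerProductSpace

/-- ℝ³ with the Euclidean structure. -/
abbrev E3 : Type := EuclideanSpace ℝ (Fin 3)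

/-- The `i`-th partial derivative ∂ᵢ f. -/
def pd (i : Fin 3) (f : E3 → ℝ) (x : E3) : ℝ := fderiv ℝ f x (EuclideanSpace.single i 1)

/-- Build a vector of E3 from its three coordinates. -/
def vec (a b c : ℝ) : E3 := (WithLp.equiv 2 (Fin 3 → ℝ)).symm ![a, b, c]

/-- The gradient ∇f. -/
def grad (f : E3 → ℝ) (x : E3) : E3 := vec (pd 0 f x) (pd 1 f x) (pd 2 f x)

/-- The Laplacian Δf = ∂₁²f + ∂₂²f + ∂₃²f. -/
def lap (f : E3 → ℝ) (x : E3) : ℝ := pd 0 (pd 0 f) x + pd 1 (pd 1 f) x + pd 2 (pd 2 f) x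

/-- The radial derivative (x·∇f)(x) = ⟨x, ∇f(x)⟩. -/
def rad (f : E3 → ℝ) (x : E3) : ℝ := ⟪x, grad f x⟫

/-- The cross product in ℝ³. -/
def cross (a b : E3) : E3 :=
  vec (a 1 * b 2 - a 2 * b 1) (a 2 * b 0 - a 0 * b 2) (a 0 * b 1 - a 1 * b 0)

/-- The angular gradient (x×∇f)(x) = x × ∇f(x). -/
def angGrad (f : E3 → ℝ) (x : E3) : E3 := cross x (grad f x)

/-- The divergence ∇·F. -/
def fdiv (F : E3 → E3) (x : E3) : ℝ :=
  pd 0 (fun y => F y 0) x + pd 1 (fun y => F y 1) x + pd 2 (fun y => F y 2) x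

/-- The curl ∇×F. -/
def curl (F : E3 → E3) (x : E3) : E3 :=
  vec (pd 1 (fun y => F y 2) x - pd 2 (fun y => F y 1) x)
      (pd 2 (fun y => F y 0) x - pd 0 (fun y => F y 2) x)
      (pd 0 (fun y => F y 1) x - pd 1 (fun y => F y 0) x)

/-- The Laplace–Beltrami operator Δ₀f(x) = ‖x‖²Δf(x) − (x·∇)(x·∇f)(x) − (x·∇f)(x). -/
def lapBel (f : E3 → ℝ) (x : E3) : ℝ := ‖x‖^2 * lap f x - rad (rad f) x - rad f x

/-- Laplace–Beltrami acting componentwise on vector fields. -/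
def lapBelV (F : E3 → E3) (x : E3) : E3 :=
  vec (lapBel (fun y => F y 0) x) (lapBel (fun y => F y 1) x) (lapBel (fun y => F y 2) x)

/-- The Sturm–Liouville operator of the first kind
L_c^{(α)}f = −Δf + (x·∇)(x·∇f) + (2α+3)(x·∇f) + c²‖x‖²f. -/
def SL (α c : ℝ) (f : E3 → ℝ) (x : E3) : ℝ :=
  -lap f x + rad (rad f) x + (2*α+3) * rad f x + c^2 * ‖x‖^2 * f x

/-- L_c^{(α)} acting componentwise on vector fields. -/
def SLv (α c : ℝ) (F : E3 → E3) (x : E3) : E3 :=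
  vec (SL α c (fun y => F y 0) x) (SL α c (fun y => F y 1) x) (SL α c (fun y => F y 2) x)

/-- The Sturm–Liouville operator of the second kind
D_c^{(α)}F(x) = (1−‖x‖²)^{−α}·(∇×((1−‖y‖²)^{α+1}∇×F))(x) − Δ₀F(x) + c²‖x‖²F(x). -/
def Dop (α c : ℝ) (F : E3 → E3) (x : E3) : E3 :=
  ((1 - ‖x‖^2) ^ (-α) : ℝ) • curl (fun y => ((1 - ‖y‖^2) ^ (α+1) : ℝ) • curl F y) x
    - lapBelV F x + (c^2 * ‖x‖^2) • F x

/-- The operator (xᵢ∂ⱼ − xⱼ∂ᵢ). -/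
def angDer (i j : Fin 3) (g : E3 → ℝ) (y : E3) : ℝ := y i * pd j g y - y j * pd i g y

@[simp] lemma vec0 (a b c : ℝ) : vec a b c 0 = a := rfl
@[simp] lemma vec1 (a b c : ℝ) : vec a b c 1 = b := rfl
@[simp] lemma vec2 (a b c : ℝ) : vec a b c 2 = c := rfl

lemma E3ext (a b : E3) (h0 : a 0 = b 0) (h1 : a 1 = b 1) (h2 : a 2 = b 2) : a = b := by
  ext i; fin_cases i <;> assumption

lemma pd_sub {f g : E3 → ℝ} {x : E3} (hf : DifferentiableAt ℝ f x) (hg : DifferentiableAt ℝ g x)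
    (i : Fin 3) : pd i (fun y => f y - g y) x = pd i f x - pd i g x := by
  simp [pd, fderiv_fun_sub hf hg]

lemma contDiff_proj (F : E3 → E3) (hF : ContDiff ℝ (⊤ : ℕ∞) F) (j : Fin 3) :
    ContDiff ℝ (⊤ : ℕ∞) (fun y => F y j) := (EuclideanSpace.proj (𝕜 := ℝ) j).contDiff.comp hF

lemma contDiff_pd {f : E3 → ℝ} (hf : ContDiff ℝ (⊤ : ℕ∞) f) (i : Fin 3) : ContDiff ℝ (⊤ : ℕ∞) (pd i f) := by
  have h := hf.fderiv_right (m := (⊤ : ℕ∞)) (by simp)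
  exact h.clm_apply contDiff_const

lemma pd_symm {f : E3 → ℝ} (hf : ContDiff ℝ (⊤ : ℕ∞) f) (i j : Fin 3) (x : E3) :
    pd i (pd j f) x = pd j (pd i f) x := by
  have hdf : Differentiable ℝ f := hf.differentiable (by simp)
  have h2 : DifferentiableAt ℝ (fderiv ℝ f) x :=
    ((hf.fderiv_right (m := (⊤ : ℕ∞)) (by simp)).differentiable (by simp)) x
  have hsym := second_derivative_symmetric (f := f) (f' := fderiv ℝ f)
    (f'' := fderiv ℝ (fderiv ℝ f) x) (fun y => (hdf y).hasFDerivAt) h2.hasFDerivAt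
  have key : ∀ v w : E3, fderiv ℝ (fun y => fderiv ℝ f y w) x v
      = fderiv ℝ (fderiv ℝ f) x v w := by
    intro v w
    rw [fderiv_clm_apply h2 (differentiableAt_const w)]
    simp
  show fderiv ℝ (fun y => fderiv ℝ f y (EuclideanSpace.single j 1)) x (EuclideanSpace.single i 1) = _
  rw [key, hsym]
  exact (key _ _).symm

lemma pd_add {f g : E3 → ℝ} {x : E3} (hf : DifferentiableAt ℝ f x) (hg : DifferentiableAt ℝ g x)
    (i : Fin 3) : pd i (fun y => f y + g y) x = pd i f x + pd i g x := by
  simp [pd, fderiv_fun_add hf hg]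

lemma pd_proj {F : E3 → E3} (hF : DifferentiableAt ℝ F x) (i j : Fin 3) :
    pd i (fun y => F y j) x = fderiv ℝ F x (EuclideanSpace.single i 1) j := by
  have h : HasFDerivAt (fun y => F y j)
      ((EuclideanSpace.proj (𝕜 := ℝ) j).comp (fderiv ℝ F x)) x :=
    (EuclideanSpace.proj (𝕜 := ℝ) j).hasFDerivAt.comp x hF.hasFDerivAt
  simp [pd, h.fderiv]

lemma inner_expand (a b : E3) : ⟪a, b⟫ = a 0 * b 0 + a 1 * b 1 + a 2 * b 2 := by
  simp [PiLp.inner_apply, Fin.sum_univ_three]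
  ring

lemma pd_inner_F {F : E3 → E3} {x : E3} (hF : ContDiff ℝ (⊤ : ℕ∞) F) (i : Fin 3) :
    pd i (fun y => ⟪y, F y⟫) x
      = (x 0 * pd i (fun y => F y 0) x + x 1 * pd i (fun y => F y 1) x
          + x 2 * pd i (fun y => F y 2) x) + F x i := by
  have hFd : DifferentiableAt ℝ F x := (hF.differentiable (by simp)) x
  have h := fderiv_inner_apply (𝕜 := ℝ) (f := fun y : E3 => y) differentiableAt_id hFd (EuclideanSpace.single i 1)
  simp only [pd, h]
  rw [inner_expand, inner_expand]
  have hp : ∀ j : Fin 3, (fderiv ℝ F x) (EuclideanSpace.single i 1) j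
      = fderiv ℝ (fun y => F y j) x (EuclideanSpace.single i 1) := by
    intro j
    have h2 : HasFDerivAt (fun y => F y j)
        ((EuclideanSpace.proj (𝕜 := ℝ) j).comp (fderiv ℝ F x)) x :=
      (EuclideanSpace.proj (𝕜 := ℝ) j).hasFDerivAt.comp x hFd.hasFDerivAt
    simp [h2.fderiv]
  rw [hp 0, hp 1, hp 2]
  simp only [EuclideanSpace.single_apply, add_left_inj]
  fin_cases i <;> simp [Fin.ext_iff]

lemma diff_nsub : Differentiable ℝ (fun y : E3 => 1 - ‖y‖^2) := by
  have : (fun y : E3 => 1 - ‖y‖^2) = fun y : E3 => 1 - ⟪y, y⟫ := by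
    funext y; rw [real_inner_self_eq_norm_sq]
  rw [this]
  exact differentiable_const _ |>.sub (differentiable_id.inner ℝ differentiable_id)

lemma pd_nsub (i : Fin 3) (x : E3) : pd i (fun y : E3 => 1 - ‖y‖^2) x = -2 * x i := by
  have he : (fun y : E3 => 1 - ‖y‖^2) = fun y : E3 => 1 - ⟪y, y⟫ := by
    funext y; rw [real_inner_self_eq_norm_sq]
  rw [pd, he]
  have hid : DifferentiableAt ℝ (fun y : E3 => y) x := differentiableAt_id
  have hin : DifferentiableAt ℝ (fun y : E3 => ⟪y, y⟫) x := hid.inner ℝ hid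
  have H : HasFDerivAt (fun y : E3 => 1 - ⟪y, y⟫) (-(fderiv ℝ (fun y : E3 => ⟪y, y⟫) x)) x :=
    hin.hasFDerivAt.const_sub 1
  rw [H.fderiv, ContinuousLinearMap.neg_apply,
    fderiv_inner_apply (𝕜 := ℝ) hid hid (EuclideanSpace.single i 1)]
  simp [inner_expand, EuclideanSpace.single_apply]
  fin_cases i <;> simp [Fin.ext_iff] <;> ring

lemma one_sub_pos {x : E3} (hx : ‖x‖ < 1) : (0:ℝ) < 1 - ‖x‖^2 := by
  have h1 : ‖x‖^2 < 1 := by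
    have := norm_nonneg x
    nlinarith
  linarith

lemma pd_w {α : ℝ} {x : E3} (hx : ‖x‖ < 1) (i : Fin 3) :
    pd i (fun y : E3 => (1 - ‖y‖^2) ^ (α+1)) x
      = (α+1) * (1 - ‖x‖^2) ^ α * (-2 * x i) := by
  have h0 := one_sub_pos hx
  have H : HasFDerivAt (fun y : E3 => (1 - ‖y‖^2) ^ (α+1))
      (((α+1) * (1 - ‖x‖^2) ^ (α+1-1)) • fderiv ℝ (fun y : E3 => 1 - ‖y‖^2) x) x :=
    (diff_nsub x).hasFDerivAt.rpow_const (Or.inl h0.ne')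
  rw [pd, H.fderiv, ContinuousLinearMap.smul_apply]
  have : (α+1-1) = α := by ring
  rw [this]
  have := pd_nsub i x
  rw [pd] at this
  rw [smul_eq_mul, this]

lemma pd_wmul {α : ℝ} {g : E3 → ℝ} {x : E3} (hx : ‖x‖ < 1) (hg : DifferentiableAt ℝ g x)
    (i : Fin 3) :
    pd i (fun y => (1 - ‖y‖^2) ^ (α+1) * g y) x
      = (α+1) * (1 - ‖x‖^2) ^ α * (-2 * x i) * g x + (1 - ‖x‖^2) ^ (α+1) * pd i g x := by
  have h0 := one_sub_pos hx
  have hw : DifferentiableAt ℝ (fun y : E3 => (1 - ‖y‖^2) ^ (α+1)) x :=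
    (diff_nsub x).rpow_const (Or.inl h0.ne')
  rw [pd, fderiv_fun_mul hw hg]
  simp only [ContinuousLinearMap.add_apply, ContinuousLinearMap.smul_apply, smul_eq_mul]
  have hh := pd_w (α := α) hx i
  rw [pd] at hh
  rw [hh, pd]
  ring

/-- decomposition of the Sturm–Liouville operator of the second kind. -/
theorem stmt_14 (F : E3 → E3) (hF : ContDiff ℝ (⊤ : ℕ∞) F) (α c : ℝ) :
    ∀ x : E3, ‖x‖ < 1 →
      Dop α c F x
        = SLv α c F x + (2*(α+1)) • F x + (1 - ‖x‖^2) • grad (fdiv F) x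
            - (2*(α+1)) • grad (fun y => ⟪y, F y⟫) x := by
  intro x hx
  have hf : ∀ k : Fin 3, ContDiff ℝ (⊤ : ℕ∞) (fun y => F y k) := contDiff_proj F hF
  have h0 := one_sub_pos hx
  have hAB : (1 - ‖x‖^2) ^ (-α) * (1 - ‖x‖^2) ^ α = 1 := by
    rw [← Real.rpow_add h0]; simp
  have hAC : (1 - ‖x‖^2) ^ (-α) * (1 - ‖x‖^2) ^ (α+1) = 1 - ‖x‖^2 := by
    rw [← Real.rpow_add h0]
    have h1 : -α + (α+1) = 1 := by ring
    rw [h1, Real.rpow_one]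
  have hdk : ∀ k i : Fin 3, DifferentiableAt ℝ (pd i (fun y => F y k)) x :=
    fun k i => ((contDiff_pd (hf k) i).differentiable (by simp)) x
  have hC0 : DifferentiableAt ℝ (fun y => pd 1 (fun z => F z 2) y - pd 2 (fun z => F z 1) y) x :=
    (hdk 2 1).sub (hdk 1 2)
  have hC1 : DifferentiableAt ℝ (fun y => pd 2 (fun z => F z 0) y - pd 0 (fun z => F z 2) y) x :=
    (hdk 0 2).sub (hdk 2 0)
  have hC2 : DifferentiableAt ℝ (fun y => pd 0 (fun z => F z 1) y - pd 1 (fun z => F z 0) y) x :=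
    (hdk 1 0).sub (hdk 0 1)
  have hfd : fdiv F = fun y => pd 0 (fun z => F z 0) y + pd 1 (fun z => F z 1) y
      + pd 2 (fun z => F z 2) y := rfl
  apply E3ext
  · simp only [Dop, SLv, SL, lapBelV, lapBel, curl, grad, fdiv, rad, lap,
      PiLp.smul_apply, PiLp.add_apply, PiLp.sub_apply, smul_eq_mul, vec0, vec1, vec2]
    rw [pd_wmul hx hC2 1, pd_wmul hx hC1 2]
    rw [pd_sub (hdk 1 0) (hdk 0 1) 1, pd_sub (hdk 0 2) (hdk 2 0) 2]
    rw [pd_inner_F hF 0]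
    rw [hfd, pd_add (f := fun y => pd 0 (fun z => F z 0) y + pd 1 (fun z => F z 1) y) ((hdk 0 0).add (hdk 1 1)) (hdk 2 2) 0, pd_add (hdk 0 0) (hdk 1 1) 0]
    rw [pd_symm (hf 1) 1 0 x, pd_symm (hf 2) 2 0 x]
    simp only [inner_expand, vec0, vec1, vec2]
    linear_combination ((α+1) * (-2 * x 1) * (pd 0 (fun y => F y 1) x - pd 1 (fun y => F y 0) x) - (α+1) * (-2 * x 2) * (pd 2 (fun y => F y 0) x - pd 0 (fun y => F y 2) x)) * hAB + ((pd 0 (pd 1 (fun y => F y 1)) x - pd 1 (pd 1 (fun y => F y 0)) x) - (pd 2 (pd 2 (fun y => F y 0)) x - pd 0 (pd 2 (fun y => F y 2)) x)) * hAC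
  · simp only [Dop, SLv, SL, lapBelV, lapBel, curl, grad, fdiv, rad, lap,
      PiLp.smul_apply, PiLp.add_apply, PiLp.sub_apply, smul_eq_mul, vec0, vec1, vec2]
    rw [pd_wmul hx hC0 2, pd_wmul hx hC2 0]
    rw [pd_sub (hdk 2 1) (hdk 1 2) 2, pd_sub (hdk 1 0) (hdk 0 1) 0]
    rw [pd_inner_F hF 1]
    rw [hfd, pd_add (f := fun y => pd 0 (fun z => F z 0) y + pd 1 (fun z => F z 1) y) ((hdk 0 0).add (hdk 1 1)) (hdk 2 2) 1, pd_add (hdk 0 0) (hdk 1 1) 1]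
    rw [pd_symm (hf 2) 2 1 x, pd_symm (hf 0) 0 1 x]
    simp only [inner_expand, vec0, vec1, vec2]
    linear_combination ((α+1) * (-2 * x 2) * (pd 1 (fun y => F y 2) x - pd 2 (fun y => F y 1) x) - (α+1) * (-2 * x 0) * (pd 0 (fun y => F y 1) x - pd 1 (fun y => F y 0) x)) * hAB + ((pd 1 (pd 2 (fun y => F y 2)) x - pd 2 (pd 2 (fun y => F y 1)) x) - (pd 0 (pd 0 (fun y => F y 1)) x - pd 1 (pd 0 (fun y => F y 0)) x)) * hAC
  · simp only [Dop, SLv, SL, lapBelV, lapBel, curl, grad, fdiv, rad, lap,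
      PiLp.smul_apply, PiLp.add_apply, PiLp.sub_apply, smul_eq_mul, vec0, vec1, vec2]
    rw [pd_wmul hx hC1 0, pd_wmul hx hC0 1]
    rw [pd_sub (hdk 0 2) (hdk 2 0) 0, pd_sub (hdk 2 1) (hdk 1 2) 1]
    rw [pd_inner_F hF 2]
    rw [hfd, pd_add (f := fun y => pd 0 (fun z => F z 0) y + pd 1 (fun z => F z 1) y) ((hdk 0 0).add (hdk 1 1)) (hdk 2 2) 2, pd_add (hdk 0 0) (hdk 1 1) 2]
    rw [pd_symm (hf 0) 0 2 x, pd_symm (hf 1) 1 2 x]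
    simp only [inner_expand, vec0, vec1, vec2]
    linear_combination ((α+1) * (-2 * x 0) * (pd 2 (fun y => F y 0) x - pd 0 (fun y => F y 2) x) - (α+1) * (-2 * x 1) * (pd 1 (fun y => F y 2) x - pd 2 (fun y => F y 1) x)) * hAB + ((pd 2 (pd 0 (fun y => F y 0)) x - pd 0 (pd 0 (fun y => F y 2)) x) - (pd 1 (pd 1 (fun y => F y 2)) x - pd 2 (pd 1 (fun y => F y 1)) x)) * hAC
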